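/- Let ρ and σ be n×n complex positive semidefinite matrices (not necessarily normalized) with ‖ρ − σ‖₁ ≤ η for some η > 0. Let W be the span of all eigenvectors of σ with eigenvalue strictly exceeding η, and let Π_W be the orthogonal projection onto W. Then ‖(I − Π_W) ρ (I − Π_W)‖_∞ ≤ 2η. -/

import Mathlib

open scoped ComplexOrder

/-- The trace norm of a complex matrix: the trace of the positive semidefinite
square root of `Aᴴ * A`. -/
noncomputable def traceNorm {n : ℕ} (A : Matrix (Fin n) (Fin n) ℂ) : ℝ :=
  ((Matrix.posSemidef_conjTranspose_mul_self A).1.eigenvectorUnitary.1 *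
    Matrix.diagonal ((fun x : ℝ => (x : ℂ)) ∘ (√·) ∘ (Matrix.posSemidef_conjTranspose_mul_self A).1.eigenvalues) *
    (star (Matrix.posSemidef_conjTranspose_mul_self A).1.eigenvectorUnitary :
      Matrix (Fin n) (Fin n) ℂ)).trace.re

/-- The operator (spectral) norm of a complex matrix: the norm of the induced
operator on Euclidean space, i.e. the largest singular value. -/
noncomputable def opNorm {n : ℕ} (A : Matrix (Fin n) (Fin n) ℂ) : ℝ :=
  ‖Matrix.toEuclideanCLM (𝕜 := ℂ) A‖

/-! Let `Q = 1 - Π_W`, the spectral projection of `σ` onto its eigenvalues `≤ η`. In the Loewner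
order `QσQ ≤ ηQ`, and `ρ - σ ≤ ‖ρ - σ‖₁ • 1` because a Hermitian matrix lies below its absolute
value, whose eigenvalues are bounded by its trace; conjugating by `Q` gives `Q(ρ - σ)Q ≤ ηQ`.
Hence `0 ≤ QρQ ≤ 2ηQ ≤ 2η • 1`, and for a positive element of a C⋆-algebra this order bound is
a norm bound. -/

open Matrix
open scoped MatrixOrder Matrix.Norms.L2Operator

lemma traceNorm_eq_re_trace_abs {n : ℕ} (A : Matrix (Fin n) (Fin n) ℂ) :
    traceNorm A = (CFC.abs A).trace.re := by
  have h := posSemidef_conjTranspose_mul_self A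
  rw [CFC.abs, star_eq_conjTranspose, CFC.sqrt_eq_real_sqrt _ h.nonneg, cfcₙ_eq_cfc, h.1.cfc_eq]
  -- `traceNorm` is the trace of `IsHermitian.cfc √· (Aᴴ * A)` with the definition unfolded
  rfl

lemma IsSelfAdjoint.le_cfcAbs {A : Type*} [NonUnitalRing A] [StarRing A] [TopologicalSpace A]
    [IsTopologicalRing A] [T2Space A] [Module ℝ A] [SMulCommClass ℝ A A] [IsScalarTower ℝ A A]
    [NonUnitalContinuousFunctionalCalculus ℝ A IsSelfAdjoint] [PartialOrder A]
    [StarOrderedRing A] [NonnegSpectrumClass ℝ A] {a : A} (ha : IsSelfAdjoint a) :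
    a ≤ CFC.abs a := by
  rw [← sub_nonneg, CFC.abs_sub_self a ha]
  exact smul_nonneg zero_le_two (CFC.negPart_nonneg a)

lemma Matrix.PosSemidef.le_re_trace_smul_one {𝕜 n : Type*} [RCLike 𝕜] [Fintype n] [DecidableEq n]
    {A : Matrix n n 𝕜} (hA : A.PosSemidef) : A ≤ RCLike.re A.trace • (1 : Matrix n n 𝕜) := by
  have htrace : RCLike.re A.trace = ∑ j, hA.1.eigenvalues j := by
    simp [hA.1.trace_eq_sum_eigenvalues]
  rw [htrace, ← Algebra.algebraMap_eq_smul_one, le_algebraMap_iff_spectrum_le hA.1.isSelfAdjoint,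
    hA.1.spectrum_real_eq_range_eigenvalues]
  rintro _ ⟨i, rfl⟩
  exact Finset.single_le_sum (fun j _ => hA.eigenvalues_nonneg j) (Finset.mem_univ i)

lemma Matrix.IsHermitian.le_traceNorm_smul_one {n : ℕ} {A : Matrix (Fin n) (Fin n) ℂ}
    (hA : A.IsHermitian) : A ≤ traceNorm A • (1 : Matrix (Fin n) (Fin n) ℂ) := by
  rw [traceNorm_eq_re_trace_abs]
  exact hA.isSelfAdjoint.le_cfcAbs.trans (CFC.abs_nonneg A).posSemidef.le_re_trace_smul_one

lemma opNorm_le_of_nonneg_of_le_smul_one {n : ℕ} {A : Matrix (Fin n) (Fin n) ℂ} {r : ℝ}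
    (hr : 0 ≤ r) (hA : 0 ≤ A) (hAr : A ≤ r • (1 : Matrix (Fin n) (Fin n) ℂ)) : opNorm A ≤ r :=
  (CStarAlgebra.norm_le_iff_le_algebraMap A hr hA).mpr (by rwa [Algebra.algebraMap_eq_smul_one])

lemma IsStarProjection.conjugate_le_smul {A : Type*} [Ring A] [StarRing A] [PartialOrder A]
    [StarOrderedRing A] [Algebra ℝ A] {q a : A} {r : ℝ} (hq : IsStarProjection q)
    (ha : a ≤ r • (1 : A)) : q * a * q ≤ r • q := by
  calc q * a * q ≤ q * (r • (1 : A)) * q := hq.isSelfAdjoint.conjugate_le_conjugate ha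
    _ = r • q := by rw [mul_smul_one, smul_mul_assoc, hq.isIdempotentElem.eq]

section RankOneSum

variable {m ι : Type*} (v : ι → m → ℂ)

noncomputable def rankOneSum (a : ι → ℝ) (s : Finset ι) : Matrix m m ℂ :=
  ∑ i ∈ s, (a i : ℂ) • vecMulVec (v i) (star (v i))

variable {v}

lemma rankOneSum_const (r : ℝ) (s : Finset ι) :
    rankOneSum v (fun _ => r) s = r • rankOneSum v 1 s := by
  simp only [rankOneSum, Finset.smul_sum, Pi.one_apply, Complex.ofReal_one, one_smul,
    Complex.coe_smul]

variable [Fintype m]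

lemma rankOneSum_mono {a b : ι → ℝ} {s : Finset ι} (hab : ∀ i ∈ s, a i ≤ b i) :
    rankOneSum v a s ≤ rankOneSum v b s := by
  refine Finset.sum_le_sum fun i hi => le_iff.mpr ?_
  rw [← sub_smul, ← Complex.ofReal_sub]
  exact (posSemidef_vecMulVec_self_star (v i)).smul
    (Complex.zero_le_real.mpr (sub_nonneg.mpr (hab i hi)))

variable [DecidableEq ι] (hv : ∀ i j, star (v i) ⬝ᵥ v j = if i = j then 1 else 0)
include hv

lemma vecMulVec_mul_vecMulVec_of_orthonormal (i j : ι) :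
    vecMulVec (v i) (star (v i)) * vecMulVec (v j) (star (v j)) =
      if i = j then vecMulVec (v i) (star (v i)) else 0 := by
  rw [vecMulVec_mul_vecMulVec, hv]
  split_ifs with h <;> simp [h]

lemma rankOneSum_mul_rankOneSum (a b : ι → ℝ) (s t : Finset ι) :
    rankOneSum v a s * rankOneSum v b t = rankOneSum v (a * b) (s ∩ t) := by
  simp only [rankOneSum, Finset.sum_mul_sum, smul_mul_smul_comm,
    vecMulVec_mul_vecMulVec_of_orthonormal hv, smul_ite, smul_zero, Finset.sum_ite_eq,
    ← Finset.sum_filter, Finset.filter_mem_eq_inter, Pi.mul_apply, Complex.ofReal_mul]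

lemma isStarProjection_rankOneSum_one (s : Finset ι) : IsStarProjection (rankOneSum v 1 s) where
  isIdempotentElem := by
    rw [IsIdempotentElem, rankOneSum_mul_rankOneSum hv, mul_one, Finset.inter_self]
  isSelfAdjoint := by
    simp [IsSelfAdjoint, rankOneSum, star_sum, star_eq_conjTranspose, conjTranspose_vecMulVec]

lemma rankOneSum_conjugate_le_smul [Fintype ι] {a : ι → ℝ} {r : ℝ} {s : Finset ι}
    (has : ∀ i ∈ s, a i ≤ r) :
    rankOneSum v 1 s * rankOneSum v a Finset.univ * rankOneSum v 1 s ≤ r • rankOneSum v 1 s := by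
  rw [rankOneSum_mul_rankOneSum hv, rankOneSum_mul_rankOneSum hv, one_mul, mul_one,
    Finset.inter_univ, Finset.inter_self, ← rankOneSum_const]
  exact rankOneSum_mono has

end RankOneSum

section Complete

variable {m : Type*} [Fintype m] [DecidableEq m] {v : m → m → ℂ}
  (hv : ∀ i j, star (v i) ⬝ᵥ v j = if i = j then 1 else 0)
include hv

lemma rankOneSum_one_univ : rankOneSum v 1 Finset.univ = 1 := by
  set V : Matrix m m ℂ := Matrix.of fun k i => v i k
  have hVV : Vᴴ * V = 1 := by
    ext i j
    simpa [V, mul_apply, dotProduct, one_apply] using hv i j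
  have hVV' : V * Vᴴ = 1 := mul_eq_one_comm.mp hVV
  ext k l
  simpa [V, rankOneSum, mul_apply, Matrix.sum_apply, vecMulVec_apply] using
    congr_fun₂ hVV' k l

lemma one_sub_rankOneSum_one (s : Finset m) : 1 - rankOneSum v 1 s = rankOneSum v 1 sᶜ := by
  rw [← rankOneSum_one_univ hv, rankOneSum, rankOneSum, rankOneSum, ← Finset.sum_add_sum_compl s,
    add_sub_cancel_left]

end Complete

theorem stmt1 {n : ℕ}
    (ρ σ : Matrix (Fin n) (Fin n) ℂ)
    (hρ : ρ.PosSemidef) (hσ : σ.PosSemidef)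
    (η : ℝ) (hη : 0 < η) (hdist : traceNorm (ρ - σ) ≤ η)
    (lam : Fin n → ℝ) (v : Fin n → Fin n → ℂ)
    (horth : ∀ i j, dotProduct (star (v i)) (v j) = if i = j then 1 else 0)
    (hspec : σ = ∑ i, (lam i : ℂ) • Matrix.vecMulVec (v i) (star (v i))) :
    opNorm (((1 : Matrix (Fin n) (Fin n) ℂ)
          - ∑ i ∈ Finset.univ.filter (fun i : Fin n => η < lam i),
              Matrix.vecMulVec (v i) (star (v i))) * ρ *
        ((1 : Matrix (Fin n) (Fin n) ℂ)
          - ∑ i ∈ Finset.univ.filter (fun i : Fin n => η < lam i),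
              Matrix.vecMulVec (v i) (star (v i)))) ≤ 2 * η := by
  set F := Finset.univ.filter (fun i : Fin n => η < lam i)
  have hQ_eq : 1 - ∑ i ∈ F, vecMulVec (v i) (star (v i)) = rankOneSum v 1 Fᶜ := by
    rw [← one_sub_rankOneSum_one horth]
    simp [rankOneSum]
  rw [hQ_eq]
  set Q := rankOneSum v 1 Fᶜ
  have hQ : IsStarProjection Q := isStarProjection_rankOneSum_one horth Fᶜ
  have hσQ : Q * σ * Q ≤ η • Q := by
    rw [hspec]
    exact rankOneSum_conjugate_le_smul horth fun i hi => by simpa [F] using hi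
  have hdiffQ : Q * (ρ - σ) * Q ≤ η • Q := by
    refine hQ.conjugate_le_smul ((hρ.1.sub hσ.1).le_traceNorm_smul_one.trans ?_)
    exact smul_le_smul_of_nonneg_right hdist zero_le_one
  refine opNorm_le_of_nonneg_of_le_smul_one (by positivity)
    (hQ.isSelfAdjoint.conjugate_nonneg hρ.nonneg) ?_
  calc Q * ρ * Q = Q * σ * Q + Q * (ρ - σ) * Q := by noncomm_ring
    _ ≤ η • Q + η • Q := add_le_add hσQ hdiffQ
    _ = (2 * η) • Q := by rw [← add_smul, two_mul]
    _ ≤ (2 * η) • 1 := smul_le_smul_of_nonneg_left hQ.le_one (by positivity)
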